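/- arXiv:0709.2529 — 2 statements merged into one kernel-verified Lean document; each statement's English description precedes it below -/
import Mathlib

section
/- Let K ≥ 1 and define a : ℕ → ℚ by a(m) = 1 for 1 ≤ m ≤ 2K+1 and the recurrence a(n)·a(n-(2K+1)) = a(n-1)·a(n-2K) + a(n-K) + a(n-K-1). Then a(4K+i) = -3 - 8K + 2i - 2K² + 12Ki + 2i² + 4K²i for all 2 ≤ i ≤ K+1. -/
/-!
Written at `n + 2K + 1`, the recurrence determines the sequence one block of length `K` at a
time: `a (2K+1+j) = 2j + 1`, then `a (3K+1+j) = 2K + 2j² + 2j + 1`, then the cubic of the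
theorem on `a (4K+1+j)` (its value at `i = 1` is `a (4K+1) = 2K² + 4K + 1`, the end of the
second block). In the first two blocks the divisor `a n` is an initial term `1`; in the third
it is `a (2K+1+j) = 2j + 1 ≠ 0`.
-/

namespace QuadraticRecurrence

variable {K : ℕ} {a : ℕ → ℚ}

theorem rec_shift
    (hrec : ∀ n, 2*K+2 ≤ n →
      a n * a (n-(2*K+1)) = a (n-1) * a (n-2*K) + a (n-K) + a (n-K-1))
    {n : ℕ} (hn : 1 ≤ n) :
    a (n + 2*K + 1) * a n = a (n + 2*K) * a (n+1) + a (n+K+1) + a (n+K) := by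
  have h := hrec (n + 2*K + 1) (by omega)
  rwa [show n + 2*K + 1 - (2*K+1) = n by omega, show n + 2*K + 1 - 1 = n + 2*K by omega,
    show n + 2*K + 1 - 2*K = n + 1 by omega, show n + 2*K + 1 - K = n + K + 1 by omega,
    show n + K + 1 - 1 = n + K by omega] at h

theorem apply_two_mul_add_one_add
    (hinit : ∀ m, 1 ≤ m → m ≤ 2*K+1 → a m = 1)
    (hrec : ∀ n, 2*K+2 ≤ n →
      a n * a (n-(2*K+1)) = a (n-1) * a (n-2*K) + a (n-K) + a (n-K-1)) :
    ∀ j ≤ K, a (2*K+1+j) = 2*j + 1 := by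
  intro j hj
  induction j with
  | zero => simpa using hinit (2*K+1) (by omega) le_rfl
  | succ j ih =>
    have h := rec_shift hrec (n := j+1) (by omega)
    rw [hinit (j+1) (by omega) (by omega), hinit (j+1+1) (by omega) (by omega),
      hinit (j+1+K+1) (by omega) (by omega), hinit (j+1+K) (by omega) (by omega),
      show j + 1 + 2*K = 2*K+1+j by omega, ih (by omega)] at h
    show a (2*K+1+j+1) = _
    push_cast
    linear_combination h

theorem apply_three_mul_add_one_add
    (hinit : ∀ m, 1 ≤ m → m ≤ 2*K+1 → a m = 1)
    (hrec : ∀ n, 2*K+2 ≤ n →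
      a n * a (n-(2*K+1)) = a (n-1) * a (n-2*K) + a (n-K) + a (n-K-1)) :
    ∀ j ≤ K, a (3*K+1+j) = 2*K + 2*j^2 + 2*j + 1 := by
  have hA := apply_two_mul_add_one_add hinit hrec
  intro j hj
  induction j with
  | zero =>
    rw [show 3*K+1+0 = 2*K+1+K by omega, hA K le_rfl]
    push_cast
    ring
  | succ j ih =>
    have h := rec_shift hrec (n := K+1+j) (by omega)
    rw [hinit (K+1+j) (by omega) (by omega), hinit (K+1+j+1) (by omega) (by omega),
      show K+1+j+2*K = 3*K+1+j by omega, ih (by omega),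
      show K+1+j+K+1 = 2*K+1+(j+1) by omega, hA (j+1) (by omega),
      show K+1+j+K = 2*K+1+j by omega, hA j (by omega)] at h
    show a (3*K+1+j+1) = _
    push_cast at h ⊢
    linear_combination h

theorem apply_four_mul_add_one_add
    (hinit : ∀ m, 1 ≤ m → m ≤ 2*K+1 → a m = 1)
    (hrec : ∀ n, 2*K+2 ≤ n →
      a n * a (n-(2*K+1)) = a (n-1) * a (n-2*K) + a (n-K) + a (n-K-1)) :
    ∀ j ≤ K, a (4*K+1+j) = 1 + 4*K + 6*j + 2*K^2 + 12*K*j + 2*j^2 + 4*K^2*j := by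
  have hA := apply_two_mul_add_one_add hinit hrec
  have hB := apply_three_mul_add_one_add hinit hrec
  intro j hj
  induction j with
  | zero =>
    rw [show 4*K+1+0 = 3*K+1+K by omega, hB K le_rfl]
    ring
  | succ j ih =>
    have h := rec_shift hrec (n := 2*K+1+j) (by omega)
    rw [hA j (by omega), show 2*K+1+j+2*K = 4*K+1+j by omega, ih (by omega),
      show 2*K+1+j+1 = 2*K+1+(j+1) by omega, hA (j+1) (by omega),
      show 2*K+1+j+K+1 = 3*K+1+(j+1) by omega, hB (j+1) (by omega),
      show 2*K+1+j+K = 3*K+1+j by omega, hB j (by omega)] at h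
    show a (4*K+1+j+1) = _
    refine mul_right_cancel₀ (b := 2*(j:ℚ)+1) (by positivity) ?_
    push_cast at h ⊢
    linear_combination h

end QuadraticRecurrence

theorem stmt2_general (K : ℕ) (a : ℕ → ℚ)
    (hinit : ∀ m, 1 ≤ m → m ≤ 2*K+1 → a m = 1)
    (hrec : ∀ n, 2*K+2 ≤ n →
      a n * a (n-(2*K+1)) = a (n-1) * a (n-2*K) + a (n-K) + a (n-K-1)) :
    ∀ i, 2 ≤ i → i ≤ K+1 →
      a (4*K+i) = -3 - 8*(K:ℚ) + 2*(i:ℚ) - 2*(K:ℚ)^2 + 12*(K:ℚ)*(i:ℚ)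
        + 2*(i:ℚ)^2 + 4*(K:ℚ)^2*(i:ℚ) := by
  rintro i hi hiK
  obtain ⟨j, rfl⟩ : ∃ j, i = j + 1 := ⟨i - 1, by omega⟩
  rw [show 4*K+(j+1) = 4*K+1+j by omega, QuadraticRecurrence.apply_four_mul_add_one_add hinit hrec j (by omega)]
  push_cast
  ring

theorem stmt2 (K : ℕ) (hK : 1 ≤ K) (a : ℕ → ℚ)
    (hinit : ∀ m, 1 ≤ m → m ≤ 2*K+1 → a m = 1)
    (hrec : ∀ n, 2*K+2 ≤ n →
      a n * a (n-(2*K+1)) = a (n-1) * a (n-2*K) + a (n-K) + a (n-K-1)) :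
    ∀ i, 2 ≤ i → i ≤ K+1 →
      a (4*K+i) = -3 - 8*(K:ℚ) + 2*(i:ℚ) - 2*(K:ℚ)^2 + 12*(K:ℚ)*(i:ℚ)
        + 2*(i:ℚ)^2 + 4*(K:ℚ)^2*(i:ℚ) :=
  stmt2_general K a hinit hrec
end

section
/- Let K ≥ 1 and define a : ℕ → ℚ by a(m)=1 for 1 ≤ m ≤ 2K+1 and the quadratic recurrence a(n)·a(n-(2K+1)) = a(n-1)·a(n-2K) + a(n-K) + a(n-K-1) for n ≥ 2K+2. Then a satisfies the linear recurrence a(n) = (2K²+8K+4)·(a(n-2K) - a(n-4K)) + a(n-6K) for all n ≥ 6K+2. -/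
/-!
Put `c = 2K² + 8K + 4`, let `L m = a (m + 6K) - c (a (m + 4K) - a (m + 2K)) - a m` be the defect of
the linear recurrence and `Q n` that of the quadratic one. For every `c`, a ring identity writes
`L (u + 2K + 1) * a (u + 6K)` as a combination of `Q` at `u, u + 2K, u + 4K, u + 6K` and of `L` at
`u, u + 1, u + K, u + K + 1, u + 2K`; the quadratic parts cancel because the coefficients
`-1, c, -c, 1` of `L` are antisymmetric. Since the terms are positive, `L` vanishes everywhere
once it vanishes for `1 ≤ m ≤ 2K + 1`. On that window only `a 1, …, a (8K + 1)` enter, and on each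
block `a (1 + j + kK)`, `j ≤ K`, the sequence is a polynomial in `K` and `j`: the recurrence at
`n = 1 + j + kK` is a first-order recurrence in `j` on block `k + 2`, with coefficients from
blocks `k` and `k + 1`.
-/

def quadDefect (K : ℕ) (a : ℕ → ℚ) (n : ℕ) : ℚ :=
  a (n + 2*K + 1) * a n - a (n + 2*K) * a (n + 1) - a (n + K + 1) - a (n + K)

def QuadRec (K : ℕ) (a : ℕ → ℚ) : Prop :=
  ∀ n, 1 ≤ n → quadDefect K a n = 0

def linDefect (K : ℕ) (c : ℚ) (a : ℕ → ℚ) (m : ℕ) : ℚ :=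
  a (m + 6*K) - c * (a (m + 4*K) - a (m + 2*K)) - a m

theorem linDefect_mul_eq (K : ℕ) (c : ℚ) (a : ℕ → ℚ) (u : ℕ) :
    linDefect K c a (u + 2*K + 1) * a (u + 6*K) =
      quadDefect K a (u + 6*K) - c * quadDefect K a (u + 4*K)
        + c * quadDefect K a (u + 2*K) - quadDefect K a u
        + a (u + 6*K + 1) * linDefect K c a (u + 2*K) + a (u + 2*K) * linDefect K c a (u + 1)
        - a (u + 2*K + 1) * linDefect K c a u
        + linDefect K c a (u + K + 1) + linDefect K c a (u + K) := by
  simp only [linDefect, quadDefect]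
  ring_nf

namespace QuadRec

variable {K : ℕ} {a : ℕ → ℚ}

theorem pos (h : QuadRec K a) (hK : 1 ≤ K) (hinit : ∀ m, 1 ≤ m → m ≤ 2*K + 1 → 0 < a m) :
    ∀ n, 1 ≤ n → 0 < a n := by
  intro n
  induction n using Nat.strong_induction_on with
  | _ n ih =>
    intro hn
    by_cases hsmall : n ≤ 2*K + 1
    · exact hinit n hn hsmall
    obtain ⟨m, hm, rfl⟩ : ∃ m, 1 ≤ m ∧ n = m + 2*K + 1 := ⟨n - (2*K + 1), by omega, by omega⟩
    have := ih m (by omega) hm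
    have := ih (m + 2*K) (by omega) (by omega)
    have := ih (m + 1) (by omega) (by omega)
    have := ih (m + K + 1) (by omega) (by omega)
    have := ih (m + K) (by omega) (by omega)
    have hprod : 0 < a (m + 2*K + 1) * a m := by
      have hq := h m hm
      rw [quadDefect] at hq
      rw [show a (m + 2*K + 1) * a m = a (m + 2*K) * a (m + 1) + a (m + K + 1) + a (m + K) by
        linear_combination hq]
      positivity
    exact pos_of_mul_pos_left hprod (by linarith)

theorem linDefect_eq_zero (h : QuadRec K a) (hK : 1 ≤ K) (ha : ∀ n, 1 ≤ n → a n ≠ 0) {c : ℚ}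
    (hbase : ∀ m, 1 ≤ m → m ≤ 2*K + 1 → linDefect K c a m = 0) :
    ∀ m, 1 ≤ m → linDefect K c a m = 0 := by
  intro m
  induction m using Nat.strong_induction_on with
  | _ m ih =>
    intro hm
    by_cases hsmall : m ≤ 2*K + 1
    · exact hbase m hm hsmall
    obtain ⟨u, hu, rfl⟩ : ∃ u, 1 ≤ u ∧ m = u + 2*K + 1 := ⟨m - (2*K + 1), by omega, by omega⟩
    have key := linDefect_mul_eq K c a u
    rw [h _ (by omega), h _ (by omega), h _ (by omega), h _ hu,
      ih (u + 2*K) (by omega) (by omega), ih (u + 1) (by omega) (by omega), ih u (by omega) hu,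
      ih (u + K + 1) (by omega) (by omega), ih (u + K) (by omega) (by omega)] at key
    simpa [ha _ (show 1 ≤ u + 6*K by omega)] using key

theorem block_step (h : QuadRec K a) (ha : ∀ n, 1 ≤ n → a n ≠ 0) (k : ℕ) {p q r : ℕ → ℚ}
    (hp : ∀ j ≤ K, a (1 + j + k*K) = p j) (hq : ∀ j ≤ K, a (1 + j + (k+1)*K) = q j)
    (hr₀ : r 0 = q K) (hr : ∀ j < K, r (j + 1) * p j = r j * p (j + 1) + q (j + 1) + q j) :
    ∀ j ≤ K, a (1 + j + (k+2)*K) = r j := by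
  intro j
  induction j with
  | zero =>
    intro _
    rw [hr₀, ← hq K le_rfl]
    congr 1; ring
  | succ j ih =>
    intro hj
    have hrec := h (1 + j + k*K) (by omega)
    unfold quadDefect at hrec
    rw [show 1 + j + k*K + 2*K + 1 = 1 + (j + 1) + (k+2)*K by ring,
      show 1 + j + k*K + 2*K = 1 + j + (k+2)*K by ring,
      show 1 + j + k*K + 1 = 1 + (j + 1) + k*K by ring,
      show 1 + j + k*K + K + 1 = 1 + (j + 1) + (k+1)*K by ring,
      show 1 + j + k*K + K = 1 + j + (k+1)*K by ring,
      hp j (by omega), hp (j + 1) hj, hq j (by omega), hq (j + 1) hj, ih (by omega)] at hrec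
    have hpj : p j ≠ 0 := hp j (by omega) ▸ ha _ (by omega)
    apply mul_right_cancel₀ hpj
    linear_combination hrec - hr j hj

end QuadRec

theorem linDefect_eq_zero_initial {K : ℕ} {a : ℕ → ℚ} (h : QuadRec K a) (ha : ∀ n, 1 ≤ n → a n ≠ 0)
    (hinit : ∀ m, 1 ≤ m → m ≤ 2*K + 1 → a m = 1) :
    ∀ m, 1 ≤ m → m ≤ 2*K + 1 → linDefect K (2*K^2 + 8*K + 4) a m = 0 := by
  have b0 : ∀ j ≤ K, a (1 + j + 0*K) = 1 := fun j hj => hinit _ (by omega) (by omega)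
  have b1 : ∀ j ≤ K, a (1 + j + (0+1)*K) = 1 := fun j hj => hinit _ (by omega) (by omega)
  have b2 := h.block_step ha 0 b0 b1 (r := fun j => 2*j + 1)
    (by simp) (fun j _ => by push_cast; ring)
  have b3 := h.block_step ha 1 b1 b2 (r := fun j => 2*j^2 + 2*j + 2*K + 1)
    (by simp) (fun j _ => by push_cast; ring)
  have b4 := h.block_step ha 2 b2 b3
    (r := fun j => 2*j^2 + (4*K^2 + 12*K + 6)*j + 2*K^2 + 4*K + 1)
    (by push_cast; ring) (fun j _ => by push_cast; ring)
  have b5 := h.block_step ha 3 b3 b4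
    (r := fun j => (4*K^2 + 16*K + 8)*j^2 + (4*K^2 + 16*K + 6)*j + 4*K^3 + 16*K^2 + 10*K + 1)
    (by push_cast; ring) (fun j _ => by push_cast; ring)
  have b6 := h.block_step ha 4 b4 b5
    (r := fun j => (4*K^2 + 16*K + 8)*j^2 + (8*K^4 + 56*K^3 + 120*K^2 + 80*K + 16)*j
      + 4*K^4 + 24*K^3 + 40*K^2 + 16*K + 1)
    (by push_cast; ring) (fun j _ => by push_cast; ring)
  have b7 := h.block_step ha 5 b5 b6
    (r := fun j => (8*K^4 + 64*K^3 + 156*K^2 + 112*K + 24)*j^2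
      + (8*K^4 + 64*K^3 + 152*K^2 + 96*K + 16)*j + 8*K^5 + 64*K^4 + 160*K^3 + 128*K^2 + 32*K + 1)
    (by push_cast; ring) (fun j _ => by push_cast; ring)
  intro m hm₁ hm₂
  by_cases hlow : m ≤ K + 1
  · obtain ⟨j, hj, rfl⟩ : ∃ j ≤ K, m = 1 + j := ⟨m - 1, by omega, by omega⟩
    rw [linDefect, show 1 + j + 6*K = 1 + j + (4+2)*K by ring, b6 j hj,
      show 1 + j + 4*K = 1 + j + (2+2)*K by ring, b4 j hj,
      show 1 + j + 2*K = 1 + j + (0+2)*K by ring, b2 j hj, hinit _ (by omega) (by omega)]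
    ring
  · obtain ⟨j, hj, rfl⟩ : ∃ j ≤ K, m = 1 + j + K := ⟨m - 1 - K, by omega, by omega⟩
    rw [linDefect, show 1 + j + K + 6*K = 1 + j + (5+2)*K by ring, b7 j hj,
      show 1 + j + K + 4*K = 1 + j + (3+2)*K by ring, b5 j hj,
      show 1 + j + K + 2*K = 1 + j + (1+2)*K by ring, b3 j hj, hinit _ (by omega) (by omega)]
    ring

theorem stmt6 (K : ℕ) (hK : 1 ≤ K) (a : ℕ → ℚ)
    (hinit : ∀ m, 1 ≤ m → m ≤ 2*K+1 → a m = 1)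
    (hrec : ∀ n, 2*K+2 ≤ n →
      a n * a (n-(2*K+1)) = a (n-1) * a (n-2*K) + a (n-K) + a (n-K-1)) :
    ∀ n, 6*K+2 ≤ n →
      a n = (2*(K:ℚ)^2 + 8*(K:ℚ) + 4) * (a (n-2*K) - a (n-4*K)) + a (n-6*K) := by
  have h : QuadRec K a := by
    intro m hm
    have hm' := hrec (m + 2*K + 1) (by omega)
    rw [show m + 2*K + 1 - (2*K + 1) = m by omega, show m + 2*K + 1 - 1 = m + 2*K by omega,
      show m + 2*K + 1 - 2*K = m + 1 by omega, show m + 2*K + 1 - K = m + K + 1 by omega,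
      show m + K + 1 - 1 = m + K by omega] at hm'
    rw [quadDefect, hm']
    ring
  have ha : ∀ n, 1 ≤ n → a n ≠ 0 := fun n hn =>
    (h.pos hK (fun m hm₁ hm₂ => by simp [hinit m hm₁ hm₂]) n hn).ne'
  have hlin := h.linDefect_eq_zero hK ha (linDefect_eq_zero_initial h ha hinit)
  intro n hn
  obtain ⟨m, hm, rfl⟩ : ∃ m, 1 ≤ m ∧ n = m + 6*K := ⟨n - 6*K, by omega, by omega⟩
  rw [show m + 6*K - 2*K = m + 4*K by omega, show m + 6*K - 4*K = m + 2*K by omega,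
    show m + 6*K - 6*K = m by omega]
  have hL := hlin m hm
  rw [linDefect] at hL
  linear_combination hL
end
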